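/- Define a_p⁰(z,w) = (ln|ln|z|²|)^p |w|² on {(z,w) ∈ ℂ² : 0 < |z| < 1/2}. Then i ∂∂̄ a_p⁰ equals (up to cross terms) -i p (ln|ln|z|²|)^{p-1} |w|² dz dz̄/|z ln|z|²|² + i (ln|ln|z|²|)^p dw dw̄, and for suitable p ≥ 1 the sum i∂∂̄(a_p(z,w) + a_p⁰(z,v)) is positive in a neighborhood of the origin in ℂ³ off the coordinate hyperplanes {z=0} ∪ {w=0}. -/

import Mathlib

/-!
For `p = 1` the function is `L(|z|²) (|v|² - L(|w|²))` with `L(s) = ln|ln s|`. The Levi form in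
the direction `ξ = (a, b, c)` is the sum of the second derivatives along the real lines through `x`
in the directions `ξ` and `iξ`. For a term `L(|u|²)` this sum is `4|a|² (s L''(s) + L'(s))` at
`s = |u|²`, and `s L''(s) + L'(s) = -1/(s ln² s)`. Hence the Levi form equals
`4α² (L(|w|²) - |v|²) + 4 L(|z|²) (|c|² + β²)` plus cross terms, where `α = |a|/(|z| ln|z|²)` and
`β = |b|/(|w| ln|w|²)`, and Cauchy–Schwarz bounds the cross terms by `8|α||v||c| + 8|α||β|`. Near
the origin `L(|z|²), L(|w|²) ≥ 3` and `|v| ≤ 1`, so AM-GM absorbs the cross terms.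
-/

/-- The function `a_p(z,w) = -(ln|ln|z|²|)^p (ln|ln|w|²|)^p`. -/
noncomputable def apFun (p : ℕ) (z w : ℂ) : ℝ :=
  -((Real.log |Real.log (‖z‖ ^ 2)|) ^ p * (Real.log |Real.log (‖w‖ ^ 2)|) ^ p)

/-- The function `a_p⁰(z,w) = (ln|ln|z|²|)^p |w|²`. -/
noncomputable def ap0Fun (p : ℕ) (z w : ℂ) : ℝ :=
  (Real.log |Real.log (‖z‖ ^ 2)|) ^ p * ‖w‖ ^ 2

/-- The Levi form of `f : ℂ³ → ℝ` at `x` in direction `v`. -/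
noncomputable def leviForm3 (f : ℂ × ℂ × ℂ → ℝ) (x v : ℂ × ℂ × ℂ) : ℝ :=
  iteratedFDeriv ℝ 2 f x ![v, v] +
    iteratedFDeriv ℝ 2 f x ![Complex.I • v, Complex.I • v]

open Filter Topology Real

lemma iteratedFDeriv_two_apply_self_eq_iteratedDeriv_line {E F : Type*} [NormedAddCommGroup E]
    [NormedSpace ℝ E] [NormedAddCommGroup F] [NormedSpace ℝ F] {f : E → F} {x : E}
    (hf : ContDiffAt ℝ 2 f x) (v : E) :
    iteratedFDeriv ℝ 2 f x ![v, v] = iteratedDeriv 2 (fun t : ℝ => f (x + t • v)) 0 := by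
  have hline (t : ℝ) : HasDerivAt (fun s : ℝ => x + s • v) v t := by
    simpa using ((hasDerivAt_id t).smul_const v).const_add x
  have hline_tendsto : Tendsto (fun t : ℝ => x + t • v) (𝓝 0) (𝓝 x) := by
    simpa using (hline 0).continuousAt.tendsto
  have hderiv : deriv (fun t : ℝ => f (x + t • v)) =ᶠ[𝓝 0] fun t => fderiv ℝ f (x + t • v) v := by
    filter_upwards [hline_tendsto.eventually (hf.eventually (by simp))] with t ht
    exact ((ht.differentiableAt (by norm_num)).hasFDerivAt.comp_hasDerivAt t (hline t)).deriv
  have hf' : DifferentiableAt ℝ (fderiv ℝ f) x :=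
    (hf.fderiv_right (m := 1) (by norm_num)).differentiableAt (by norm_num)
  have hsecond : HasDerivAt (fun t : ℝ => fderiv ℝ f (x + t • v) v)
      (fderiv ℝ (fderiv ℝ f) x v v) 0 := by
    have hx : HasFDerivAt (fderiv ℝ f) (fderiv ℝ (fderiv ℝ f) x) (x + (0 : ℝ) • v) := by
      rw [zero_smul, add_zero]
      exact hf'.hasFDerivAt
    simpa using (hx.comp_hasDerivAt (f := fun t : ℝ => x + t • v) 0 (hline 0)).clm_apply
      (hasDerivAt_const (0 : ℝ) v)
  rw [iteratedFDeriv_two_apply, iteratedDeriv_succ, iteratedDeriv_one, hderiv.deriv_eq,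
    hsecond.deriv]
  rfl

section InnerProductSpace

variable {E : Type*} [NormedAddCommGroup E] [InnerProductSpace ℝ E]

lemma hasDerivAt_norm_add_smul_sq (u a : E) (t : ℝ) :
    HasDerivAt (fun t : ℝ => ‖u + t • a‖ ^ 2) (2 * inner ℝ (u + t • a) a) t := by
  simpa using (((hasDerivAt_id t).smul_const a).const_add u).norm_sq

lemma deriv_norm_add_smul_sq (u a : E) :
    deriv (fun t : ℝ => ‖u + t • a‖ ^ 2) = fun t => 2 * inner ℝ (u + t • a) a :=
  funext fun t => (hasDerivAt_norm_add_smul_sq u a t).deriv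

lemma iteratedDeriv_two_norm_add_smul_sq (u a : E) (t : ℝ) :
    iteratedDeriv 2 (fun t : ℝ => ‖u + t • a‖ ^ 2) t = 2 * ‖a‖ ^ 2 := by
  have h : HasDerivAt (fun t : ℝ => 2 * inner ℝ (u + t • a) a) (2 * ‖a‖ ^ 2) t := by
    have := (((hasDerivAt_id t).smul_const a).const_add u).inner ℝ (hasDerivAt_const t a)
    simpa [real_inner_self_eq_norm_sq] using this.const_mul 2
  rw [iteratedDeriv_succ, iteratedDeriv_one, deriv_norm_add_smul_sq, h.deriv]

lemma iteratedDeriv_two_comp_norm_add_smul_sq {ψ : ℝ → ℝ} (u a : E)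
    (hψ : ContDiffAt ℝ 2 ψ (‖u‖ ^ 2)) :
    iteratedDeriv 2 (fun t : ℝ => ψ (‖u + t • a‖ ^ 2)) 0 =
      iteratedDeriv 2 ψ (‖u‖ ^ 2) * (2 * inner ℝ u a) ^ 2 + deriv ψ (‖u‖ ^ 2) * (2 * ‖a‖ ^ 2) := by
  have hq : ContDiffAt ℝ 2 (fun t : ℝ => ‖u + t • a‖ ^ 2) 0 :=
    (contDiff_norm_sq ℝ).contDiffAt.comp 0 (by fun_prop)
  have := iteratedDeriv_comp_two (f := fun t : ℝ => ‖u + t • a‖ ^ 2) (by simpa using hψ) hq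
  simpa [Function.comp_def, deriv_norm_add_smul_sq, iteratedDeriv_two_norm_add_smul_sq] using this

lemma deriv_comp_norm_add_smul_sq {ψ : ℝ → ℝ} (u a : E) (hψ : DifferentiableAt ℝ ψ (‖u‖ ^ 2)) :
    deriv (fun t : ℝ => ψ (‖u + t • a‖ ^ 2)) 0 = deriv ψ (‖u‖ ^ 2) * (2 * inner ℝ u a) := by
  have hψ' : HasDerivAt ψ (deriv ψ (‖u‖ ^ 2)) (‖u + (0 : ℝ) • a‖ ^ 2) := by
    simpa using hψ.hasDerivAt
  have h := hψ'.comp (0 : ℝ) (hasDerivAt_norm_add_smul_sq u a 0)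
  simpa [Function.comp_def] using h.deriv

lemma contDiffAt_comp_norm_add_smul_sq {ψ : ℝ → ℝ} (u a : E) (hψ : ContDiffAt ℝ 2 ψ (‖u‖ ^ 2)) :
    ContDiffAt ℝ 2 (fun t : ℝ => ψ (‖u + t • a‖ ^ 2)) 0 :=
  ContDiffAt.comp (g := ψ) 0 (by simpa using hψ)
    ((contDiff_norm_sq ℝ).contDiffAt.comp 0 (by fun_prop))

lemma iteratedDeriv_two_mul_sub_comp_norm_add_smul_sq {ψ : ℝ → ℝ} (z w v a b c : E)
    (hz : ContDiffAt ℝ 2 ψ (‖z‖ ^ 2)) (hw : ContDiffAt ℝ 2 ψ (‖w‖ ^ 2)) :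
    iteratedDeriv 2
        (fun t : ℝ => ψ (‖z + t • a‖ ^ 2) * (‖v + t • c‖ ^ 2 - ψ (‖w + t • b‖ ^ 2))) 0 =
      (iteratedDeriv 2 ψ (‖z‖ ^ 2) * (2 * inner ℝ z a) ^ 2 + deriv ψ (‖z‖ ^ 2) * (2 * ‖a‖ ^ 2)) *
          (‖v‖ ^ 2 - ψ (‖w‖ ^ 2)) +
        2 * (deriv ψ (‖z‖ ^ 2) * (2 * inner ℝ z a)) *
          (2 * inner ℝ v c - deriv ψ (‖w‖ ^ 2) * (2 * inner ℝ w b)) +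
        ψ (‖z‖ ^ 2) * (2 * ‖c‖ ^ 2 -
          (iteratedDeriv 2 ψ (‖w‖ ^ 2) * (2 * inner ℝ w b) ^ 2 +
            deriv ψ (‖w‖ ^ 2) * (2 * ‖b‖ ^ 2))) := by
  have hz' := contDiffAt_comp_norm_add_smul_sq z a hz
  have hw' := contDiffAt_comp_norm_add_smul_sq w b hw
  have hv' : ContDiffAt ℝ 2 (fun t : ℝ => ‖v + t • c‖ ^ 2) 0 :=
    (contDiff_norm_sq ℝ).contDiffAt.comp 0 (by fun_prop)
  have hsub := hv'.sub hw'
  rw [iteratedDeriv_fun_mul hz' hsub]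
  simp only [Finset.sum_range_succ, Finset.sum_range_zero, Nat.reduceSub, iteratedDeriv_zero,
    iteratedDeriv_one]
  rw [iteratedDeriv_fun_sub hv' hw', deriv_fun_sub (hv'.differentiableAt (by norm_num))
      (hw'.differentiableAt (by norm_num)),
    iteratedDeriv_two_comp_norm_add_smul_sq z a hz, iteratedDeriv_two_comp_norm_add_smul_sq w b hw,
    iteratedDeriv_two_norm_add_smul_sq, deriv_norm_add_smul_sq,
    deriv_comp_norm_add_smul_sq z a (hz.differentiableAt (by norm_num)),
    deriv_comp_norm_add_smul_sq w b (hw.differentiableAt (by norm_num))]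
  simp only [Nat.choose_zero_right, Nat.choose_succ_self_right, Nat.choose_self, Nat.reduceAdd,
    Nat.cast_one, Nat.cast_ofNat, zero_smul, add_zero, one_mul, zero_add]
  ring

end InnerProductSpace

lemma Complex.inner_mul_inner_add_inner_I_smul_mul_inner_I_smul (z a v c : ℂ) :
    inner ℝ z a * inner ℝ v c + inner ℝ z (Complex.I • a) * inner ℝ v (Complex.I • c) =
      inner ℝ ((starRingEnd ℂ) z * a) ((starRingEnd ℂ) v * c) := by
  simp only [Complex.inner, Complex.mul_re, Complex.mul_im, Complex.conj_re, Complex.conj_im,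
    smul_eq_mul, Complex.I_re, Complex.I_im]
  ring

lemma Complex.abs_inner_mul_inner_add_inner_I_smul_mul_inner_I_smul_le (z a v c : ℂ) :
    |inner ℝ z a * inner ℝ v c + inner ℝ z (Complex.I • a) * inner ℝ v (Complex.I • c)| ≤
      ‖z‖ * ‖a‖ * (‖v‖ * ‖c‖) := by
  rw [Complex.inner_mul_inner_add_inner_I_smul_mul_inner_I_smul]
  simpa using abs_real_inner_le_norm ((starRingEnd ℂ) z * a) ((starRingEnd ℂ) v * c)

lemma Complex.inner_sq_add_inner_I_smul_sq (z a : ℂ) :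
    inner ℝ z a ^ 2 + inner ℝ z (Complex.I • a) ^ 2 = ‖z‖ ^ 2 * ‖a‖ ^ 2 := by
  rw [sq, sq, Complex.inner_mul_inner_add_inner_I_smul_mul_inner_I_smul,
    real_inner_self_eq_norm_sq]
  simp [mul_pow]

lemma norm_sq_ne_one {E : Type*} [SeminormedAddGroup E] {u : E} (hu : ‖u‖ ≠ 1) : ‖u‖ ^ 2 ≠ 1 :=
  (pow_eq_one_iff_of_nonneg (norm_nonneg u) two_ne_zero).not.mpr hu

noncomputable def logAbsLog (s : ℝ) : ℝ := log |log s|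

lemma logAbsLog_eq_log_log : logAbsLog = fun s => log (log s) :=
  funext fun s => log_abs (log s)

lemma contDiffAt_logAbsLog {s : ℝ} (hs : 0 < s) (hs1 : s ≠ 1) {n : WithTop ℕ∞} :
    ContDiffAt ℝ n logAbsLog s := by
  rw [logAbsLog_eq_log_log]
  exact (contDiffAt_log.2 (log_ne_zero_of_pos_of_ne_one hs hs1)).comp s (contDiffAt_log.2 hs.ne')

lemma hasDerivAt_logAbsLog {s : ℝ} (hs : 0 < s) (hs1 : s ≠ 1) :
    HasDerivAt logAbsLog (s * log s)⁻¹ s := by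
  rw [logAbsLog_eq_log_log]
  convert (hasDerivAt_log hs.ne').log (log_ne_zero_of_pos_of_ne_one hs hs1) using 1
  rw [mul_inv, div_eq_mul_inv]

lemma iteratedDeriv_two_logAbsLog {s : ℝ} (hs : 0 < s) (hs1 : s ≠ 1) :
    iteratedDeriv 2 logAbsLog s = -(log s + 1) / (s * log s) ^ 2 := by
  have hderiv : deriv logAbsLog =ᶠ[𝓝 s] fun r => (r * log r)⁻¹ := by
    filter_upwards [isOpen_Ioi.mem_nhds hs, isOpen_ne.mem_nhds hs1] with r hr hr1
    exact (hasDerivAt_logAbsLog hr hr1).deriv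
  have hinv := (hasDerivAt_mul_log hs.ne').fun_inv
    (mul_ne_zero hs.ne' (log_ne_zero_of_pos_of_ne_one hs hs1))
  rw [iteratedDeriv_succ, iteratedDeriv_one, hderiv.deriv_eq, hinv.deriv, neg_div]

lemma three_lt_logAbsLog {s : ℝ} (hs : 0 < s) (hs' : s < exp (-exp 3)) : 3 < logAbsLog s := by
  have hlog : log s < -exp 3 := (log_lt_iff_lt_exp hs).2 hs'
  have hneg : log s < 0 := hlog.trans (neg_neg_of_pos (exp_pos 3))
  rw [logAbsLog, lt_log_iff_exp_lt (abs_pos.2 hneg.ne), abs_of_neg hneg]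
  linarith

lemma ne_zero_and_norm_ne_one_of_one_le_logAbsLog {u : ℂ} (h : 1 ≤ logAbsLog (‖u‖ ^ 2)) :
    u ≠ 0 ∧ ‖u‖ ≠ 1 := by
  refine ⟨?_, fun h1 => ?_⟩
  · rintro rfl
    norm_num [logAbsLog] at h
  · norm_num [logAbsLog, h1] at h

lemma apFun_one_add_ap0Fun_one (z w v : ℂ) :
    apFun 1 z w + ap0Fun 1 z v = logAbsLog (‖z‖ ^ 2) * (‖v‖ ^ 2 - logAbsLog (‖w‖ ^ 2)) := by
  simp only [apFun, ap0Fun, logAbsLog, pow_one]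
  ring

lemma contDiffAt_logAbsLog_norm_sq {u : ℂ} (hu : u ≠ 0) (hu1 : ‖u‖ ≠ 1) :
    ContDiffAt ℝ 2 logAbsLog (‖u‖ ^ 2) :=
  contDiffAt_logAbsLog (by positivity) (norm_sq_ne_one hu1)

lemma contDiffAt_logAbsLog_norm_sq_mul {z w v : ℂ} (hz : z ≠ 0) (hz1 : ‖z‖ ≠ 1) (hw : w ≠ 0)
    (hw1 : ‖w‖ ≠ 1) :
    ContDiffAt ℝ 2
      (fun y : ℂ × ℂ × ℂ => logAbsLog (‖y.1‖ ^ 2) * (‖y.2.2‖ ^ 2 - logAbsLog (‖y.2.1‖ ^ 2)))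
      (z, w, v) := by
  have hsq : ContDiff ℝ 2 fun u : ℂ => ‖u‖ ^ 2 := contDiff_norm_sq ℝ
  exact ((contDiffAt_logAbsLog_norm_sq hz hz1).comp (z, w, v)
    (hsq.comp contDiff_fst).contDiffAt).mul
      ((hsq.comp (contDiff_snd.comp contDiff_snd)).contDiffAt.sub
        ((contDiffAt_logAbsLog_norm_sq hw hw1).comp (z, w, v)
          (hsq.comp (contDiff_fst.comp contDiff_snd)).contDiffAt))

lemma leviForm3_logAbsLog_norm_sq_mul {z w v : ℂ} (hz : z ≠ 0) (hz1 : ‖z‖ ≠ 1) (hw : w ≠ 0)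
    (hw1 : ‖w‖ ≠ 1) (a b c : ℂ) :
    leviForm3 (fun y => logAbsLog (‖y.1‖ ^ 2) * (‖y.2.2‖ ^ 2 - logAbsLog (‖y.2.1‖ ^ 2)))
        (z, w, v) (a, b, c) =
      4 * (‖a‖ / (‖z‖ * log (‖z‖ ^ 2))) ^ 2 * (logAbsLog (‖w‖ ^ 2) - ‖v‖ ^ 2) +
        8 * (inner ℝ z a * inner ℝ v c + inner ℝ z (Complex.I • a) * inner ℝ v (Complex.I • c)) /
          (‖z‖ ^ 2 * log (‖z‖ ^ 2)) -
        8 * (inner ℝ z a * inner ℝ w b + inner ℝ z (Complex.I • a) * inner ℝ w (Complex.I • b)) /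
          (‖z‖ ^ 2 * log (‖z‖ ^ 2) * (‖w‖ ^ 2 * log (‖w‖ ^ 2))) +
        4 * logAbsLog (‖z‖ ^ 2) * (‖c‖ ^ 2 + (‖b‖ / (‖w‖ * log (‖w‖ ^ 2))) ^ 2) := by
  have hψz := contDiffAt_logAbsLog_norm_sq hz hz1
  have hψw := contDiffAt_logAbsLog_norm_sq hw hw1
  have hf := contDiffAt_logAbsLog_norm_sq_mul (v := v) hz hz1 hw hw1
  have hAz : 0 < ‖z‖ ^ 2 := by positivity
  have hAw : 0 < ‖w‖ ^ 2 := by positivity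
  rw [leviForm3, iteratedFDeriv_two_apply_self_eq_iteratedDeriv_line hf,
    iteratedFDeriv_two_apply_self_eq_iteratedDeriv_line hf]
  simp only [Prod.smul_mk, Prod.mk_add_mk]
  rw [iteratedDeriv_two_mul_sub_comp_norm_add_smul_sq z w v a b c hψz hψw,
    iteratedDeriv_two_mul_sub_comp_norm_add_smul_sq z w v _ _ _ hψz hψw,
    (hasDerivAt_logAbsLog hAz (norm_sq_ne_one hz1)).deriv,
    (hasDerivAt_logAbsLog hAw (norm_sq_ne_one hw1)).deriv,
    iteratedDeriv_two_logAbsLog hAz (norm_sq_ne_one hz1),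
    iteratedDeriv_two_logAbsLog hAw (norm_sq_ne_one hw1)]
  -- Summing over `ξ` and `I • ξ` turns `⟪z, a⟫²` into `‖z‖² ‖a‖²`; the remaining coefficient
  -- `s L''(s) + L'(s)` collapses to `-1 / (s log² s)`.
  simp only [norm_smul, Complex.norm_I, one_mul, mul_pow,
    eq_sub_of_add_eq' (Complex.inner_sq_add_inner_I_smul_sq z a),
    eq_sub_of_add_eq' (Complex.inner_sq_add_inner_I_smul_sq w b)]
  have hLz := log_ne_zero_of_pos_of_ne_one hAz (norm_sq_ne_one hz1)
  have hLw := log_ne_zero_of_pos_of_ne_one hAw (norm_sq_ne_one hw1)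
  have hz' : ‖z‖ ≠ 0 := norm_ne_zero_iff.2 hz
  have hw' : ‖w‖ ≠ 0 := norm_ne_zero_iff.2 hw
  field_simp
  ring

lemma sq_mul_sub_add_nonneg {α β γ ν M₁ M₂ X Y : ℝ} (hν₀ : 0 ≤ ν) (hν : ν ≤ 1) (hM₁ : 1 ≤ M₁)
    (hM₂ : 3 ≤ M₂) (hX : |X| ≤ |α| * (ν * γ)) (hY : |Y| ≤ |α| * |β|) :
    0 ≤ 4 * α ^ 2 * (M₂ - ν ^ 2) + 8 * X - 8 * Y + 4 * M₁ * (γ ^ 2 + β ^ 2) := by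
  have hαν : 8 * (|α| * (ν * γ)) ≤ 4 * α ^ 2 * ν ^ 2 + 4 * γ ^ 2 := by
    nlinarith [sq_nonneg (|α| * ν - γ), sq_abs α]
  have hαβ : 8 * (|α| * |β|) ≤ 4 * α ^ 2 + 4 * β ^ 2 := by
    nlinarith [sq_nonneg (|α| - |β|), sq_abs α, sq_abs β]
  have hM₂ν : 0 ≤ α ^ 2 * (M₂ - 2 * ν ^ 2 - 1) := by
    have : ν ^ 2 ≤ 1 := pow_le_one₀ hν₀ hν
    exact mul_nonneg (sq_nonneg α) (by linarith)
  have hM₁' : 0 ≤ (M₁ - 1) * (γ ^ 2 + β ^ 2) := by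
    have := sub_nonneg.2 hM₁
    positivity
  linarith [neg_abs_le X, le_abs_self Y]

lemma leviForm3_logAbsLog_norm_sq_mul_nonneg {z w v : ℂ} (hz : 1 ≤ logAbsLog (‖z‖ ^ 2))
    (hw : 3 ≤ logAbsLog (‖w‖ ^ 2)) (hv : ‖v‖ ≤ 1) (ξ : ℂ × ℂ × ℂ) :
    0 ≤ leviForm3 (fun y => logAbsLog (‖y.1‖ ^ 2) * (‖y.2.2‖ ^ 2 - logAbsLog (‖y.2.1‖ ^ 2)))
      (z, w, v) ξ := by
  obtain ⟨a, b, c⟩ := ξ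
  obtain ⟨hz0, hz1⟩ := ne_zero_and_norm_ne_one_of_one_le_logAbsLog hz
  obtain ⟨hw0, hw1⟩ := ne_zero_and_norm_ne_one_of_one_le_logAbsLog (u := w) (by linarith)
  have hz' : 0 < ‖z‖ := norm_pos_iff.2 hz0
  have hw' : 0 < ‖w‖ := norm_pos_iff.2 hw0
  have hLz : 0 < |log (‖z‖ ^ 2)| :=
    abs_pos.2 (log_ne_zero_of_pos_of_ne_one (by positivity) (norm_sq_ne_one hz1))
  have hLw : 0 < |log (‖w‖ ^ 2)| :=
    abs_pos.2 (log_ne_zero_of_pos_of_ne_one (by positivity) (norm_sq_ne_one hw1))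
  rw [leviForm3_logAbsLog_norm_sq_mul hz0 hz1 hw0 hw1, mul_div_assoc, mul_div_assoc]
  refine sq_mul_sub_add_nonneg (norm_nonneg v) hv hz hw ?_ ?_
  · simp only [abs_div, abs_mul, abs_norm, abs_pow]
    calc _ ≤ ‖z‖ * ‖a‖ * (‖v‖ * ‖c‖) / (‖z‖ ^ 2 * |log (‖z‖ ^ 2)|) :=
          div_le_div_of_nonneg_right
            (Complex.abs_inner_mul_inner_add_inner_I_smul_mul_inner_I_smul_le z a v c)
            (by positivity)
      _ = _ := by field_simp
  · simp only [abs_div, abs_mul, abs_norm, abs_pow]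
    calc _ ≤ ‖z‖ * ‖a‖ * (‖w‖ * ‖b‖) /
            (‖z‖ ^ 2 * |log (‖z‖ ^ 2)| * (‖w‖ ^ 2 * |log (‖w‖ ^ 2)|)) :=
          div_le_div_of_nonneg_right
            (Complex.abs_inner_mul_inner_add_inner_I_smul_mul_inner_I_smul_le z a w b)
            (by positivity)
      _ = _ := by field_simp

/-- For suitable `p ≥ 1`, the form `i∂∂̄(a_p(z,w) + a_p⁰(z,v))` is positive in a
neighborhood of the origin in `ℂ³`, off the coordinate hyperplanes `{z=0} ∪ {w=0}`. -/
theorem stmt9 :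
    ∃ p : ℕ, 1 ≤ p ∧ ∃ ε > 0, ∀ x : ℂ × ℂ × ℂ,
      0 < ‖x.1‖ → ‖x.1‖ < ε → 0 < ‖x.2.1‖ → ‖x.2.1‖ < ε → ‖x.2.2‖ < ε →
      ∀ v : ℂ × ℂ × ℂ,
        0 ≤ leviForm3 (fun y => apFun p y.1 y.2.1 + ap0Fun p y.1 y.2.2) x v := by
  refine ⟨1, le_rfl, exp (-exp 3), exp_pos _, ?_⟩
  rintro ⟨z, w, v⟩ hz0 hz hw0 hw hv ξ
  have hε : exp (-exp 3) < 1 := exp_lt_one_iff.2 (neg_neg_of_pos (exp_pos 3))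
  have hM {u : ℂ} (hu0 : 0 < ‖u‖) (hu : ‖u‖ < exp (-exp 3)) : 3 < logAbsLog (‖u‖ ^ 2) :=
    three_lt_logAbsLog (by positivity) (by nlinarith)
  simp only [apFun_one_add_ap0Fun_one]
  exact leviForm3_logAbsLog_norm_sq_mul_nonneg (by linarith [hM hz0 hz]) (hM hw0 hw).le
    (hv.trans hε).le ξ
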